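/- For a finger f and query q with q < f in universe {0,...,N−1}, setting h = ⌈log₂(f−q)⌉, the interval I = [⌊f/2^h⌋·2^h − 2^h, ⌊f/2^h⌋·2^h + 2^h − 1] (of length 2^{h+1}) contains both q and f, and 2^{h+1} ≤ 4·(f−q). -/
import Mathlib


/-- With h = ⌈log₂(f-q)⌉ and L = ⌊f/2^h⌋·2^h, the interval
I = [L - 2^h, L + 2^h - 1] of length 2^{h+1} contains both q and f, and
2^{h+1} ≤ 4(f-q). -/
theorem stmt13 (N f q : ℕ) (hq : q < f) (hf : f ≤ N - 1) :
    let h := Nat.clog 2 (f - q)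
    let L := (f / 2 ^ h) * 2 ^ h
    (L - 2 ^ h ≤ q ∧ q ≤ L + 2 ^ h - 1) ∧
    (L - 2 ^ h ≤ f ∧ f ≤ L + 2 ^ h - 1) ∧
    2 ^ (h + 1) ≤ 4 * (f - q) := by
  intro h L
  have hpos : 1 ≤ f - q := Nat.sub_pos_of_lt hq
  have hle : f - q ≤ 2 ^ h := Nat.le_pow_clog (by norm_num) _
  have hLf : L ≤ f := Nat.div_mul_le_self f _
  have hfL : f < L + 2 ^ h := by
    have hmod := Nat.div_add_mod f (2 ^ h)
    rw [Nat.mul_comm] at hmod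
    show f < f / 2 ^ h * 2 ^ h + 2 ^ h
    have hm : f % 2 ^ h < 2 ^ h := Nat.mod_lt _ (by positivity)
    omega
  have hfle : f ≤ L + 2 ^ h - 1 := Nat.le_sub_one_of_lt hfL
  refine ⟨⟨?_, le_trans hq.le hfle⟩, ⟨le_trans (Nat.sub_le _ _) hLf, hfle⟩, ?_⟩
  · -- L - 2^h ≤ q
    have : L ≤ q + 2 ^ h := by
      have : f ≤ q + (f - q) := by omega
      exact le_trans hLf (le_trans this (by omega))
    omega
  · -- 2^(h+1) ≤ 4*(f-q)
    rcases eq_or_lt_of_le hpos with h1 | h2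
    · have : h = 0 := by show Nat.clog 2 (f - q) = 0; rw [← h1]; simp
      simp [this]; omega
    · have := Nat.pow_pred_clog_lt_self (by norm_num : 1 < 2) h2
      have h2h : 2 ^ (h - 1) < f - q := this
      have hh : 1 ≤ h := by
        by_contra hc
        push_neg at hc
        interval_cases h
        · simp at h2h; omega
      have : 2 ^ h < 2 * (f - q) := by
        calc 2 ^ h = 2 * 2 ^ (h - 1) := by
              rw [← pow_succ']; congr 1; omega
        _ < 2 * (f - q) := by omega
      rw [pow_succ]
      omega
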